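/- Let μ be a finite positive Borel measure on an open set Ω ⊆ ℝⁿ and τ : Ω → Λ_h(ℝⁿ) a Borel map with ∫_Ω |τ| dμ < +∞ (1 ≤ h ≤ n). Let ω be a continuous differential l-form on an open set U ⊆ Ω with 1 ≤ l ≤ h−1, and let K := K(τ, ω). If x ∈ U satisfies the Lebesgue-point conditions (3.2) and x is a 0-superdensity point of K with respect to the measure |τ|μ, then x ∈ K. -/

import Mathlib

open MeasureTheory Metric Filter ENNReal Topology

noncomputable section

/-- Euclidean `n`-space. -/
abbrev Euc (n : ℕ) := EuclideanSpace ℝ (Fin n)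

/-- Coordinates of an element of the exterior algebra of `ℝⁿ` with respect to the
standard basis `{e_s : s ⊆ {1,…,n}}`.  The degree-`k` part corresponds to the
coefficients indexed by sets of cardinality `k`, i.e. to `Λ_k(ℝⁿ)` (resp. `Λ^k(ℝⁿ)`). -/
abbrev MV (n : ℕ) := Finset (Fin n) → ℝ

namespace MV

variable {n : ℕ}

/-- `v` belongs to `Λ_k(ℝⁿ)` (equivalently `Λ^k(ℝⁿ)`): only coefficients of degree `k`
are nonzero. -/
def IsGrade (k : ℕ) (v : MV n) : Prop := ∀ s : Finset (Fin n), s.card ≠ k → v s = 0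

/-- The duality pairing `⟨ζ; α⟩ := Σ_i ζ_i α_i`. -/
def pair (v w : MV n) : ℝ := ∑ s : Finset (Fin n), v s * w s

/-- The sign `(-1)^{#{(a,b) ∈ s × t : b < a}}` showing up in the wedge product of basis
elements: `e_s ∧ e_t = sign s t • e_{s ∪ t}` for disjoint `s`, `t`. -/
def sign (s t : Finset (Fin n)) : ℝ :=
  (-1 : ℝ) ^ ((s ×ˢ t).filter fun p => p.2 < p.1).card

/-- The wedge product, in coordinates. -/
def wedge (v w : MV n) : MV n :=
  fun u => ∑ s ∈ u.powerset, sign s (u \ s) * v s * w (u \ s)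

/-- The basis multivector `e_t` (resp. basis covector `dx_t`). -/
def delta (t : Finset (Fin n)) : MV n := fun s => if s = t then 1 else 0

/-- Interior multiplication `ζ ⌟ α`, characterized by `⟨ζ ⌟ α; β⟩ = ⟨ζ; α ∧ β⟩`. -/
def imul (v a : MV n) : MV n := fun t => pair v (wedge a (delta t))

/-- The canonical embedding `ℝⁿ = Λ_1(ℝⁿ) ↪ Λ_•(ℝⁿ)`. -/
def embed (x : Euc n) : MV n := fun s => ∑ i : Fin n, if s = {i} then x i else 0

/-- The canonical identification of the degree-one part of `Λ_•(ℝⁿ)` with `ℝⁿ`. -/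
def toVec (v : MV n) : Euc n := WithLp.toLp 2 (fun i => v {i})

/-- The wedge product `w 0 ∧ w 1 ∧ ⋯ ∧ w (k-1)` of a family of vectors of `ℝⁿ`. -/
def wedgeFam {k : ℕ} (w : Fin k → Euc n) : MV n :=
  (List.ofFn fun i => embed (w i)).foldr wedge (delta ∅)

/-- A `k`-vector is simple if it is a wedge product of `k` vectors of `ℝⁿ`. -/
def IsSimple (k : ℕ) (v : MV n) : Prop := ∃ w : Fin k → Euc n, v = wedgeFam w

/-- `span(v) := {v ⌟ α : α ∈ Λ^{k-1}(ℝⁿ)} ⊆ ℝⁿ`, for `v ∈ Λ_k(ℝⁿ)`. -/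
def spanSet (k : ℕ) (v : MV n) : Set (Euc n) :=
  {u | ∃ a : MV n, IsGrade (k - 1) a ∧ u = toVec (imul v a)}

/-- The (Euclidean) norm of a multivector. -/
def norm' (v : MV n) : ℝ := Real.sqrt (∑ s : Finset (Fin n), v s ^ 2)

/-- The exterior derivative of a (multi)covector field, in coordinates:
`(dψ)_u(x) = Σ_{i ∈ u} sign({i}, u \ {i}) ∂_i ψ_{u \ {i}}(x)`. -/
def extDeriv (ψ : Euc n → MV n) (x : Euc n) : MV n :=
  fun u => ∑ i ∈ u, sign {i} (u \ {i}) * fderiv ℝ ψ x (EuclideanSpace.single i 1) (u \ {i})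

end MV

/-- `x` is an `h`-superdensity point of `E` with respect to `λ`, i.e.
`λ(B_r(x) ∖ E) = λ(B_r(x))·o(r^h)` as `r → 0+`. -/
def SuperdensityPt {n : ℕ} (lam : Measure (Euc n)) (h : ℝ) (E : Set (Euc n)) (x : Euc n) :
    Prop :=
  ∀ ε > (0 : ℝ), ∃ r₀ > (0 : ℝ), ∀ r : ℝ, 0 < r → r < r₀ →
    lam (ball x r \ E) ≤ ENNReal.ofReal (ε * r ^ h) * lam (ball x r)

/-- The upper `s`-density `Θ^{*s}(μ, x) := limsup_{r→0+} μ(B_r(x))/(2r)^s`. -/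
def upperDensity {n : ℕ} (μ : Measure (Euc n)) (s : ℝ) (x : Euc n) : ℝ≥0∞ :=
  Filter.limsup (fun r : ℝ => μ (ball x r) / ENNReal.ofReal ((2 * r) ^ s)) (𝓝[>] 0)

/-- The lower `s`-density `Θ^s_*(μ, x) := liminf_{r→0+} μ(B_r(x))/(2r)^s`. -/
def lowerDensity {n : ℕ} (μ : Measure (Euc n)) (s : ℝ) (x : Euc n) : ℝ≥0∞ :=
  Filter.liminf (fun r : ℝ => μ (ball x r) / ENNReal.ofReal ((2 * r) ^ s)) (𝓝[>] 0)

/-- The upper derivative `D̄(λ, μ, x) := limsup_{r→0+} λ(B_r(x))/μ(B_r(x))`. -/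
def upperDeriv {n : ℕ} (lam μ : Measure (Euc n)) (x : Euc n) : ℝ≥0∞ :=
  Filter.limsup (fun r : ℝ => lam (ball x r) / μ (ball x r)) (𝓝[>] 0)

/-- The total variation `|τμ| = |τ|μ` of the current `T = τμ`. -/
def totalVar {n : ℕ} (τ : Euc n → MV n) (μ : Measure (Euc n)) : Measure (Euc n) :=
  μ.withDensity fun x => ENNReal.ofReal (MV.norm' (τ x))

/-- The Lebesgue-point conditions (3.2): the `μ`-averages of `τ` and of `|τ|` on `B_r(x)`
converge to `τ(x)` and `|τ(x)|` respectively, as `r → 0+`. -/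
def LebesguePt {n : ℕ} (μ : Measure (Euc n)) (τ : Euc n → MV n) (x : Euc n) : Prop :=
  Tendsto (fun r : ℝ => (μ (ball x r)).toReal⁻¹ • ∫ y in ball x r, τ y ∂μ)
    (𝓝[>] 0) (𝓝 (τ x)) ∧
  Tendsto (fun r : ℝ => (∫ y in ball x r, MV.norm' (τ y) ∂μ) / (μ (ball x r)).toReal)
    (𝓝[>] 0) (𝓝 (MV.norm' (τ x)))

/-- `K(τ, ω) := {y ∈ U : ⟨τ(y) ⌟ α; ω_y⟩ = 0 for all α ∈ Λ^{h-l}(ℝⁿ)}`, where `τ` is an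
`h`-vectorfield and `ω` a differential `l`-form on `U`. -/
def Kset {n : ℕ} (h l : ℕ) (U : Set (Euc n)) (τ : Euc n → MV n) (ω : Euc n → MV n) :
    Set (Euc n) :=
  {y ∈ U | ∀ a : MV n, MV.IsGrade (h - l) a → MV.pair (MV.imul (τ y) a) (ω y) = 0}

/-- `T = τμ` is a normal `h`-current on `Ω` with `∂T = τ'μ'` : both measures are finite,
`τ, τ'` are Borel and integrable, take values in `Λ_h` resp. `Λ_{h-1}`, and
`∫ ⟨τ'; ψ⟩ dμ' = ∫ ⟨τ; dψ⟩ dμ` for every smooth compactly supported `(h-1)`-form `ψ` on `Ω`. -/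
def IsNormalPair {n : ℕ} (h : ℕ) (Ω : Set (Euc n)) (μ μ' : Measure (Euc n))
    (τ τ' : Euc n → MV n) : Prop :=
  IsFiniteMeasure μ ∧ IsFiniteMeasure μ' ∧
  Measurable τ ∧ Measurable τ' ∧
  Integrable τ μ ∧ Integrable τ' μ' ∧
  (∀ x, MV.IsGrade h (τ x)) ∧ (∀ x, MV.IsGrade (h - 1) (τ' x)) ∧
  ∀ ψ : Euc n → MV n, ContDiff ℝ (⊤ : ℕ∞) ψ → HasCompactSupport ψ → tsupport ψ ⊆ Ω →
    (∀ y, MV.IsGrade (h - 1) (ψ y)) →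
    ∫ y, MV.pair (τ' y) (ψ y) ∂μ' = ∫ y, MV.pair (τ y) (MV.extDeriv ψ y) ∂μ

/-- `D` is a `k`-distribution of class `C^p` on `Ω`: each `D(x)` is a `k`-dimensional
subspace and, locally, `D` is the intersection of the kernels of `n - k` differential
1-forms of class `C^p` (the defining forms). -/
def IsDistribution {n : ℕ} (p : ℕ∞) (k : ℕ) (Ω : Set (Euc n))
    (D : Euc n → Submodule ℝ (Euc n)) : Prop :=
  (∀ x ∈ Ω, Module.finrank ℝ (D x) = k) ∧
  ∀ x ∈ Ω, ∃ U : Set (Euc n), U ⊆ Ω ∧ IsOpen U ∧ x ∈ U ∧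
    ∃ ω : Fin (n - k) → Euc n → (Euc n →L[ℝ] ℝ),
      (∀ j, ContDiffOn ℝ p (ω j) U) ∧
      ∀ y ∈ U, D y = ⨅ j, LinearMap.ker (ω j y).toLinearMap

/-- The tangency set `Γ(τ, D) := {x ∈ Ω : span(τ(x)) ⊆ D(x)}` of a `k`-vectorfield `τ`
with respect to a distribution `D`. -/
def tangencySet {n : ℕ} (k : ℕ) (Ω : Set (Euc n)) (τ : Euc n → MV n)
    (D : Euc n → Submodule ℝ (Euc n)) : Set (Euc n) :=
  {x ∈ Ω | MV.spanSet k (τ x) ⊆ (D x : Set (Euc n))}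

/-- A `C¹` `k`-distribution `D` is involutive at `x`: for some family of `C¹` defining
forms `ω⁽¹⁾, …, ω⁽ⁿ⁻ᵏ⁾` near `x`, each `(dω⁽ʲ⁾)_x` vanishes on `D(x) × D(x)`;
here `(dω)_x(u, v) = (Dω_x u)(v) − (Dω_x v)(u)`. -/
def InvolutiveAt {n : ℕ} (k : ℕ) (Ω : Set (Euc n)) (D : Euc n → Submodule ℝ (Euc n))
    (x : Euc n) : Prop :=
  ∃ U : Set (Euc n), U ⊆ Ω ∧ IsOpen U ∧ x ∈ U ∧
    ∃ ω : Fin (n - k) → Euc n → (Euc n →L[ℝ] ℝ),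
      (∀ j, ContDiffOn ℝ 1 (ω j) U) ∧
      (∀ y ∈ U, D y = ⨅ j, LinearMap.ker (ω j y).toLinearMap) ∧
      ∀ j, ∀ u ∈ D x, ∀ v ∈ D x, fderiv ℝ (ω j) x u v = fderiv ℝ (ω j) x v u

/-! Fix `α` and let `Φ v := ⟨v ⌟ α; ω_x⟩`. By the first Lebesgue-point condition, `Φ(τ(x))` is
the limit of the `μ`-averages of `Φ ∘ τ` over `B_r(x)`. Write
`Φ(τ(y)) = ⟨τ(y) ⌟ α; ω_x − ω_y⟩ + ⟨τ(y) ⌟ α; ω_y⟩`: the first term is `o(|τ(y)|)` by continuity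
of `ω`, the second is `O(|τ(y)|)` and vanishes on `K`, so by superdensity its integral over
`B_r(x)` is `o(|τ|μ(B_r(x)))`. As the `μ`-averages of `|τ|` stay bounded by the second
Lebesgue-point condition, the averages of `Φ ∘ τ` tend to `0`. -/

namespace MV

variable {n : ℕ}

lemma norm'_eq_norm_toLp (v : MV n) : norm' v = ‖WithLp.toLp 2 v‖ := by
  simp [norm', EuclideanSpace.norm_eq]

lemma norm_le_norm' (v : MV n) : ‖v‖ ≤ norm' v := by
  rw [norm'_eq_norm_toLp]
  exact (pi_norm_le_iff_of_nonneg (norm_nonneg _)).2 fun s =>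
    PiLp.norm_apply_le (WithLp.toLp 2 v) s

lemma integrable_norm' {X : Type*} [MeasurableSpace X] {μ : Measure X} {τ : X → MV n}
    (hτ : Integrable τ μ) : Integrable (fun y => norm' (τ y)) μ := by
  simpa only [norm'_eq_norm_toLp, ContinuousLinearEquiv.coe_coe,
    PiLp.continuousLinearEquiv_symm_apply] using
    ((PiLp.continuousLinearEquiv 2 ℝ fun _ : Finset (Fin n) => ℝ).symm.toContinuousLinearMap
      |>.integrable_comp hτ).norm

/-- Interior multiplication by `a` is `v ↦ v ᵥ* A` for the matrix `A s t = (a ∧ e_t)_s`, so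
`(v, w) ↦ ⟨v ⌟ a; w⟩` is the bilinear form of `A`. -/
def imulPairing (a : MV n) : MV n →L[ℝ] MV n →L[ℝ] ℝ :=
  LinearMap.toContinuousLinearMap
    (LinearMap.toContinuousLinearMap.toLinearMap ∘ₗ
      Matrix.toLinearMap₂' ℝ (Matrix.of fun s t => wedge a (delta t) s))

lemma imulPairing_apply (a v w : MV n) : imulPairing a v w = pair (imul v a) w := by
  simp only [imulPairing, LinearMap.coe_toContinuousLinearMap', LinearMap.coe_comp,
    Function.comp_apply, LinearEquiv.coe_coe]
  rw [Matrix.toLinearMap₂'_apply', Matrix.dotProduct_mulVec]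
  rfl

end MV

lemma SuperdensityPt.eventually_measure_diff_le {n : ℕ} {lam : Measure (Euc n)}
    {E : Set (Euc n)} {x : Euc n} (h : SuperdensityPt lam 0 E x) {ε : ℝ} (hε : 0 < ε) :
    ∀ᶠ r in 𝓝[>] (0 : ℝ), lam (ball x r \ E) ≤ ENNReal.ofReal ε * lam (ball x r) := by
  obtain ⟨r₀, hr₀, hE⟩ := h ε hε
  filter_upwards [Ioo_mem_nhdsGT hr₀] with r hr
  simpa using hE r hr.1 hr.2

section Negligible

variable {X F : Type*} [MeasurableSpace X] [NormedAddCommGroup F]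

lemma enorm_le_ofReal_mul_ofReal {a : F} {c b : ℝ} (hc : 0 ≤ c) (h : ‖a‖ ≤ c * b) :
    ‖a‖ₑ ≤ ENNReal.ofReal c * ENNReal.ofReal b := by
  rw [← ofReal_norm, ← ENNReal.ofReal_mul hc]
  exact ENNReal.ofReal_le_ofReal h

lemma setLIntegral_enorm_add_le_withDensity {μ : Measure X} {ρ : X → ℝ} (hρ : AEMeasurable ρ μ)
    {s K : Set X} (hs : MeasurableSet s) {g k : X → F} {c C : ℝ} (hc : 0 ≤ c) (hC : 0 ≤ C)
    (hg : ∀ y ∈ s, ‖g y‖ ≤ c * ρ y) (hk : ∀ y ∈ s, ‖k y‖ ≤ C * ρ y) (hkK : ∀ y ∈ K, k y = 0) :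
    ∫⁻ y in s, ‖g y + k y‖ₑ ∂μ ≤
      ENNReal.ofReal c * μ.withDensity (fun y => ENNReal.ofReal (ρ y)) s +
        ENNReal.ofReal C * μ.withDensity (fun y => ENNReal.ofReal (ρ y)) (s \ K) := by
  set lam := μ.withDensity fun y => ENNReal.ofReal (ρ y)
  -- `K` need not be measurable; the measurable hull of `s \ K` has the same `lam`-measure.
  set E := toMeasurable lam (s \ K)
  have hpt : ∀ y ∈ s, ‖g y + k y‖ₑ ≤ ENNReal.ofReal c * ENNReal.ofReal (ρ y) +
      E.indicator (fun y => ENNReal.ofReal C * ENNReal.ofReal (ρ y)) y := by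
    intro y hy
    by_cases hyK : y ∈ K
    · rw [hkK y hyK, add_zero]
      exact (enorm_le_ofReal_mul_ofReal hc (hg y hy)).trans le_self_add
    · rw [Set.indicator_of_mem (subset_toMeasurable lam _ (show y ∈ s \ K from ⟨hy, hyK⟩))]
      exact (enorm_add_le _ _).trans (add_le_add (enorm_le_ofReal_mul_ofReal hc (hg y hy))
        (enorm_le_ofReal_mul_ofReal hC (hk y hy)))
  calc ∫⁻ y in s, ‖g y + k y‖ₑ ∂μ
      ≤ ∫⁻ y in s, ENNReal.ofReal c * ENNReal.ofReal (ρ y) +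
          E.indicator (fun y => ENNReal.ofReal C * ENNReal.ofReal (ρ y)) y ∂μ :=
        setLIntegral_mono' hs hpt
    _ ≤ ENNReal.ofReal c * lam s +
          ∫⁻ y, E.indicator (fun y => ENNReal.ofReal C * ENNReal.ofReal (ρ y)) y ∂μ := by
        rw [lintegral_add_left' (hρ.ennreal_ofReal.const_mul _).restrict,
          lintegral_const_mul' _ _ ENNReal.ofReal_ne_top, ← withDensity_apply _ hs]
        exact add_le_add_right (setLIntegral_le_lintegral _ _) _
    _ = ENNReal.ofReal c * lam s + ENNReal.ofReal C * lam (s \ K) := by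
        rw [lintegral_indicator (measurableSet_toMeasurable _ _),
          lintegral_const_mul' _ _ ENNReal.ofReal_ne_top,
          ← withDensity_apply _ (measurableSet_toMeasurable _ _), measure_toMeasurable]

variable [PseudoMetricSpace X]

def IsNegligibleAt (μ : Measure X) (ρ : X → ℝ) (f : X → F) (x : X) : Prop :=
  ∀ ε > (0 : ℝ), ∀ᶠ r in 𝓝[>] (0 : ℝ), ∫⁻ y in ball x r, ‖f y‖ₑ ∂μ ≤
    ENNReal.ofReal ε * μ.withDensity (fun y => ENNReal.ofReal (ρ y)) (ball x r)

theorem IsNegligibleAt.tendsto_average [NormedSpace ℝ F] [OpensMeasurableSpace X]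
    {μ : Measure X} {ρ : X → ℝ} {f : X → F} {x : X} (hf : IsNegligibleAt μ ρ f x)
    (hρ₀ : 0 ≤ ρ) (hρ : Integrable ρ μ) {L : ℝ}
    (hL : Tendsto (fun r => (∫ y in ball x r, ρ y ∂μ) / (μ (ball x r)).toReal) (𝓝[>] 0) (𝓝 L)) :
    Tendsto (fun r => (μ (ball x r)).toReal⁻¹ • ∫ y in ball x r, f y ∂μ) (𝓝[>] 0) (𝓝 0) := by
  set lam := μ.withDensity fun y => ENNReal.ofReal (ρ y)
  have hlam : ∀ r, (lam (ball x r)).toReal = ∫ y in ball x r, ρ y ∂μ := fun r => by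
    rw [withDensity_apply _ measurableSet_ball, integral_eq_lintegral_of_nonneg_ae
      (ae_of_all _ hρ₀) hρ.aestronglyMeasurable.restrict]
  have hlam_ne_top : ∀ r, lam (ball x r) ≠ ⊤ := fun r => by
    rw [withDensity_apply _ measurableSet_ball]
    exact hρ.integrableOn.lintegral_lt_top.ne
  have hbound : ∀ ε > 0, ∀ᶠ r in 𝓝[>] (0 : ℝ),
      ‖(μ (ball x r)).toReal⁻¹ • ∫ y in ball x r, f y ∂μ‖ ≤
        ε * ((∫ y in ball x r, ρ y ∂μ) / (μ (ball x r)).toReal) := by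
    intro ε hε
    filter_upwards [hf ε hε] with r hr
    have hint : ‖∫ y in ball x r, f y ∂μ‖ ≤ ε * ∫ y in ball x r, ρ y ∂μ :=
      calc ‖∫ y in ball x r, f y ∂μ‖
          ≤ (∫⁻ y in ball x r, ENNReal.ofReal ‖f y‖ ∂μ).toReal := norm_integral_le_lintegral_norm _
        _ ≤ (ENNReal.ofReal ε * lam (ball x r)).toReal :=
          ENNReal.toReal_mono (ENNReal.mul_ne_top ENNReal.ofReal_ne_top (hlam_ne_top r))
            (by simpa only [ofReal_norm] using hr)
        _ = ε * ∫ y in ball x r, ρ y ∂μ := by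
          rw [ENNReal.toReal_mul, ENNReal.toReal_ofReal hε.le, hlam]
    rw [norm_smul, Real.norm_of_nonneg (inv_nonneg.2 ENNReal.toReal_nonneg)]
    calc _ ≤ (μ (ball x r)).toReal⁻¹ * (ε * ∫ y in ball x r, ρ y ∂μ) := by gcongr
      _ = _ := by ring
  rw [Metric.tendsto_nhds]
  intro ε hε
  have hL₁ : 0 < |L| + 1 := by positivity
  filter_upwards [hbound (ε / (|L| + 1)) (by positivity),
    hL.eventually_lt_const ((le_abs_self L).trans_lt (lt_add_one _))] with r hr hLr
  rw [dist_zero_right]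
  calc _ ≤ ε / (|L| + 1) * ((∫ y in ball x r, ρ y ∂μ) / (μ (ball x r)).toReal) := hr
    _ < ε / (|L| + 1) * (|L| + 1) := by gcongr
    _ = ε := div_mul_cancel₀ _ hL₁.ne'

theorem isNegligibleAt_add_of_superdensityPt {n : ℕ} {μ : Measure (Euc n)} {ρ : Euc n → ℝ}
    (hρ₀ : 0 ≤ ρ) (hρ : AEMeasurable ρ μ) {K : Set (Euc n)} {x : Euc n}
    (hK : SuperdensityPt (μ.withDensity fun y => ENNReal.ofReal (ρ y)) 0 K x)
    {g k : Euc n → F} (hg : g =o[𝓝 x] ρ) (hk : k =O[𝓝 x] ρ) (hkK : ∀ y ∈ K, k y = 0) :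
    IsNegligibleAt μ ρ (fun y => g y + k y) x := by
  intro ε hε
  obtain ⟨C, hC, hkC⟩ := hk.exists_pos
  have hnear : ∀ᶠ y in 𝓝 x, ‖g y‖ ≤ ε / 2 * ρ y ∧ ‖k y‖ ≤ C * ρ y := by
    filter_upwards [hg.def (half_pos hε), hkC.bound] with y hgy hky
    rw [Real.norm_of_nonneg (hρ₀ y)] at hgy hky
    exact ⟨hgy, hky⟩
  obtain ⟨δ, hδ, hball⟩ := Metric.eventually_nhds_iff_ball.1 hnear
  filter_upwards [Ioo_mem_nhdsGT hδ,
    hK.eventually_measure_diff_le (div_pos (half_pos hε) hC)] with r hr hdiff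
  have hsub : ∀ y ∈ ball x r, ‖g y‖ ≤ ε / 2 * ρ y ∧ ‖k y‖ ≤ C * ρ y :=
    fun y hy => hball y (ball_subset_ball hr.2.le hy)
  refine (setLIntegral_enorm_add_le_withDensity hρ measurableSet_ball (half_pos hε).le hC.le
    (fun y hy => (hsub y hy).1) (fun y hy => (hsub y hy).2) hkK).trans ?_
  calc _ ≤ ENNReal.ofReal (ε / 2) * μ.withDensity (fun y => ENNReal.ofReal (ρ y)) (ball x r) +
        ENNReal.ofReal C * (ENNReal.ofReal (ε / 2 / C) *
          μ.withDensity (fun y => ENNReal.ofReal (ρ y)) (ball x r)) := by gcongr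
    _ = _ := by
        rw [← mul_assoc, ← ENNReal.ofReal_mul hC.le, mul_div_cancel₀ _ hC.ne', ← add_mul,
          ← ENNReal.ofReal_add (by positivity) (by positivity), add_halves]

end Negligible

theorem statement6_general {n h l : ℕ}
    (μ : Measure (Euc n))
    (τ : Euc n → MV n) (hτi : Integrable τ μ)
    (U : Set (Euc n)) (hUopen : IsOpen U)
    (ω : Euc n → MV n) (hωc : ContinuousOn ω U)
    (x : Euc n) (hxU : x ∈ U)
    (hleb : LebesguePt μ τ x)
    (hsd : SuperdensityPt (totalVar τ μ) 0 (Kset h l U τ ω) x) :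
    x ∈ Kset h l U τ ω := by
  refine ⟨hxU, fun a ha => ?_⟩
  set B := MV.imulPairing a
  set ρ := fun y => MV.norm' (τ y)
  have hρ₀ : 0 ≤ ρ := fun y => Real.sqrt_nonneg _
  have hρ : Integrable ρ μ := MV.integrable_norm' hτi
  have hτρ : τ =O[𝓝 x] ρ := .of_bound 1 <| .of_forall fun y => by
    simpa [ρ, Real.norm_of_nonneg (hρ₀ y)] using MV.norm_le_norm' (τ y)
  have hωx : Tendsto ω (𝓝 x) (𝓝 (ω x)) := hωc.continuousAt (hUopen.mem_nhds hxU)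
  have hg : (fun y => B (τ y) (ω x - ω y)) =o[𝓝 x] ρ := by
    refine B.isBoundedBilinearMap.isBigO_comp.trans_isLittleO ?_
    have hω0 : Tendsto (fun y => ω x - ω y) (𝓝 x) (𝓝 0) := by
      simpa using (tendsto_const_nhds (x := ω x)).sub hωx
    simpa only [mul_one] using
      hτρ.norm_left.mul_isLittleO ((Asymptotics.isLittleO_one_iff ℝ).2 hω0).norm_left
  have hk : (fun y => B (τ y) (ω y)) =O[𝓝 x] ρ := by
    refine B.isBoundedBilinearMap.isBigO_comp.trans ?_
    simpa using hτρ.norm_left.mul (hωx.isBigO_one ℝ).norm_left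
  have hneg := isNegligibleAt_add_of_superdensityPt hρ₀ hρ.aemeasurable hsd hg hk
    fun y hy => (MV.imulPairing_apply a _ _).trans (hy.2 a ha)
  simp only [map_sub, sub_add_cancel] at hneg
  have hlim : Tendsto (fun r => (μ (ball x r)).toReal⁻¹ • ∫ y in ball x r, B (τ y) (ω x) ∂μ)
      (𝓝[>] 0) (𝓝 (B (τ x) (ω x))) := by
    refine (((B.flip (ω x)).continuous.tendsto (τ x)).comp hleb.1).congr fun r => ?_
    simp [map_smul, ← (B.flip (ω x)).integral_comp_comm hτi.integrableOn]
  rw [← MV.imulPairing_apply]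
  exact tendsto_nhds_unique hlim (hneg.tendsto_average hρ₀ hρ hleb.2)

/-- **Remark 3.2.** Let `μ` be a finite positive Borel measure on `Ω` and `τ : Ω → Λ_h(ℝⁿ)`
Borel with `∫_Ω |τ| dμ < ∞`.  Let `ω` be a continuous differential `l`-form on an open
`U ⊆ Ω` (`1 ≤ l ≤ h-1`) and `K := K(τ, ω)`.  If `x ∈ U` satisfies the Lebesgue-point
conditions (3.2) and is a `0`-superdensity point of `K` with respect to `|τ|μ`, then `x ∈ K`. -/
theorem statement6 {n h l : ℕ} (hh : h ≤ n) (hl : 1 ≤ l) (hlh : l + 1 ≤ h)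
    (Ω : Set (Euc n)) (hΩ : IsOpen Ω)
    (μ : Measure (Euc n)) [IsFiniteMeasure μ]
    (τ : Euc n → MV n) (hτm : Measurable τ) (hτi : Integrable τ μ)
    (hτg : ∀ x, MV.IsGrade h (τ x))
    (U : Set (Euc n)) (hUopen : IsOpen U) (hUΩ : U ⊆ Ω)
    (ω : Euc n → MV n) (hωc : ContinuousOn ω U) (hωg : ∀ y, MV.IsGrade l (ω y))
    (x : Euc n) (hxU : x ∈ U)
    (hleb : LebesguePt μ τ x)
    (hsd : SuperdensityPt (totalVar τ μ) 0 (Kset h l U τ ω) x) :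
    x ∈ Kset h l U τ ω :=
  statement6_general μ τ hτi U hUopen ω hωc x hxU hleb hsd
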